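/- Let n ≥ 1, α > 0, λ > 0, f ∈ ℝⁿ, and K, D : ℝⁿ → ℝⁿ linear maps. Then minimizing E(u) = (λ/2)·‖Ku - f‖² + Σᵢ √(α + (Du)ᵢ²) is equivalent to the saddle-point problem min_u max_{p : ‖p‖_∞ ≤ 1} [(λ/2)·‖Ku - f‖² + ⟨Du, p⟩ + Σᵢ √(α(1 - pᵢ²))]; i.e., for every u, E(u) equals the inner maximum. -/
import Mathlib

lemma aux_le (α x t : ℝ) (hα : 0 < α) (ht : |t| ≤ 1) :
    x * t + Real.sqrt (α * (1 - t ^ 2)) ≤ Real.sqrt (α + x ^ 2) := by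
  have ht2 : t ^ 2 ≤ 1 := by nlinarith [abs_nonneg t, sq_abs t]
  set s := Real.sqrt (1 - t ^ 2) with hs
  have hs0 : 0 ≤ s := Real.sqrt_nonneg _
  have hs2 : s ^ 2 = 1 - t ^ 2 := Real.sq_sqrt (by linarith)
  have hsa : Real.sqrt (α * (1 - t ^ 2)) = Real.sqrt α * s := by
    rw [hs, Real.sqrt_mul hα.le]
  have ha0 : 0 ≤ Real.sqrt α := Real.sqrt_nonneg _
  have ha2 : Real.sqrt α ^ 2 = α := Real.sq_sqrt hα.le
  have key : (x * t + Real.sqrt α * s) ^ 2 ≤ α + x ^ 2 := by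
    nlinarith [sq_nonneg (x * s - Real.sqrt α * t)]
  calc x * t + Real.sqrt (α * (1 - t ^ 2))
      ≤ |x * t + Real.sqrt α * s| := by rw [hsa]; exact le_abs_self _
    _ = Real.sqrt ((x * t + Real.sqrt α * s) ^ 2) := (Real.sqrt_sq_eq_abs _).symm
    _ ≤ Real.sqrt (α + x ^ 2) := Real.sqrt_le_sqrt key

lemma aux_eq (α x : ℝ) (hα : 0 < α) :
    x * (x / Real.sqrt (α + x ^ 2)) +
      Real.sqrt (α * (1 - (x / Real.sqrt (α + x ^ 2)) ^ 2)) = Real.sqrt (α + x ^ 2) := by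
  set r := Real.sqrt (α + x ^ 2) with hr
  have hr0 : 0 < r := Real.sqrt_pos.2 (by positivity)
  have hr2 : r ^ 2 = α + x ^ 2 := Real.sq_sqrt (by positivity)
  have h1 : 1 - (x / r) ^ 2 = α / r ^ 2 := by field_simp; linarith
  rw [h1]
  have : α * (α / r ^ 2) = (α / r) ^ 2 := by field_simp
  rw [this, Real.sqrt_sq (by positivity)]
  field_simp
  linarith

lemma aux_mem (α x : ℝ) (hα : 0 < α) : |x / Real.sqrt (α + x ^ 2)| ≤ 1 := by
  have hr0 : 0 < Real.sqrt (α + x ^ 2) := Real.sqrt_pos.2 (by positivity)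
  rw [abs_div, abs_of_pos hr0, div_le_one hr0]
  calc |x| = Real.sqrt (x ^ 2) := (Real.sqrt_sq_eq_abs x).symm
    _ ≤ Real.sqrt (α + x ^ 2) := Real.sqrt_le_sqrt (by linarith)

theorem stmt_12 (n : ℕ) (hn : 1 ≤ n) (α lam : ℝ) (hα : 0 < α) (hlam : 0 < lam)
    (f : EuclideanSpace ℝ (Fin n))
    (K D : EuclideanSpace ℝ (Fin n) →ₗ[ℝ] EuclideanSpace ℝ (Fin n)) :
    ∀ u : EuclideanSpace ℝ (Fin n),
      lam / 2 * ‖K u - f‖ ^ 2 + ∑ i, Real.sqrt (α + (D u i) ^ 2) =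
        sSup ((fun p : Fin n → ℝ =>
            lam / 2 * ‖K u - f‖ ^ 2 + ∑ i, D u i * p i +
              ∑ i, Real.sqrt (α * (1 - (p i) ^ 2))) ''
          {p : Fin n → ℝ | ∀ i, |p i| ≤ 1}) := by
  intro u
  symm
  apply IsGreatest.csSup_eq
  constructor
  · refine ⟨fun i => D u i / Real.sqrt (α + (D u i) ^ 2), fun i => aux_mem α (D u i) hα, ?_⟩
    simp only
    rw [add_assoc, ← Finset.sum_add_distrib]
    congr 1
    apply Finset.sum_congr rfl
    intro i _
    exact aux_eq α (D u i) hα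
  · rintro v ⟨p, hp, rfl⟩
    simp only
    rw [add_assoc, ← Finset.sum_add_distrib]
    have : ∑ i, (D u i * p i + Real.sqrt (α * (1 - (p i) ^ 2))) ≤
        ∑ i, Real.sqrt (α + (D u i) ^ 2) :=
      Finset.sum_le_sum fun i _ => aux_le α (D u i) (p i) hα (hp i)
    linarith
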